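/- arXiv:1303.6491 — 2 statements merged into one kernel-verified Lean document; each statement's English description precedes it below -/
import Mathlib

section
/- The constructible special point data of level 2 with q nodes are exactly the following: for each ℓ ∈ {1,…,q}, the data ((ℓ,ℓ),((2,1),(2,2),(1,2))) and ((ℓ,ℓ),((2,1),(1,1),(1,2))); and for each pair ℓ₁, ℓ₂ ∈ {1,…,q} with ℓ₁ ≠ ℓ₂, the data ((ℓ₁,ℓ₂),((1,1),(1,2),(2,2))) and ((ℓ₁,ℓ₂),((1,1),(2,1),(2,2))). -/
/-!
A level-2 datum arises by one step from a level-1 datum, and the only level-1 data are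
`((ℓ₀),((1),(2)))`. For `<_ℓ` the tuples `(1),(2)` are sorted as `(1),(2)` when `ℓ₀ ≠ ℓ` and as
`(2),(1)` when `ℓ₀ = ℓ`; in each case the two choices `h ∈ {1,2}` give the two listed data.
-/

/-- The relation `u <_ℓ u'` on `{1,2}^d`, relative to node labels `lab : Fin d → ℕ`. -/
def ltNode {d : ℕ} (lab : Fin d → ℕ) (ℓ : ℕ) (u u' : Fin d → ℕ) : Prop :=
  (∃ k₀ : Fin d, lab k₀ = ℓ ∧ u k₀ = 2 ∧ u' k₀ = 1 ∧
      ∀ k : Fin d, k₀ < k → lab k = ℓ → u k = u' k) ∨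
  ((∀ k : Fin d, lab k = ℓ → u k = u' k) ∧
    ∃ k₀ : Fin d, lab k₀ ≠ ℓ ∧ u k₀ = 1 ∧ u' k₀ = 2 ∧
      ∀ k : Fin d, k < k₀ → u k = u' k)

/-- Constructible special point data of level `d` with `q` nodes. -/
inductive Constructible (q : ℕ) :
    (d : ℕ) → (Fin d → ℕ) → (Fin (d + 1) → Fin d → ℕ) → Prop
  | base (ℓ : ℕ) (h1 : 1 ≤ ℓ) (hq : ℓ ≤ q) :
      Constructible q 1 (fun _ => ℓ) ![![1], ![2]]
  | step {d : ℕ} {lab : Fin d → ℕ} {u : Fin (d + 1) → Fin d → ℕ}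
      (hR : Constructible q d lab u) (ℓ : ℕ) (h1 : 1 ≤ ℓ) (hq : ℓ ≤ q)
      (v : Fin (d + 1) → Fin d → ℕ) (σ : Equiv.Perm (Fin (d + 1)))
      (hv : ∀ j, v j = u (σ j))
      (hsort : ∀ i j : Fin (d + 1), i < j → ltNode lab ℓ (v i) (v j))
      (h : ℕ) (hh1 : 1 ≤ h) (hh2 : h ≤ d + 1) :
      Constructible q (d + 1) (Fin.snoc lab ℓ)
        (fun j : Fin (d + 2) =>
          if hj : (j : ℕ) < h then Fin.snoc (v ⟨(j : ℕ), by omega⟩) 1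
          else Fin.snoc (v ⟨(j : ℕ) - 1, by omega⟩) 2)

/-- `a^ℓ_u(R)`: the number of `k` with `ℓ_k = ℓ` and `u(k) = 2`. -/
def aCount {d : ℕ} (lab : Fin d → ℕ) (ℓ : ℕ) (u : Fin d → ℕ) : ℕ :=
  (Finset.univ.filter (fun k : Fin d => lab k = ℓ ∧ u k = 2)).card

/-- `|a_u(R)|`: the number of `k` with `u(k) = 2`. -/
def aTot {d : ℕ} (u : Fin d → ℕ) : ℕ :=
  (Finset.univ.filter (fun k : Fin d => u k = 2)).card

/-- Lexicographic order on tuples, comparing at the smallest coordinate where they differ. -/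
def lexLt {d : ℕ} (u u' : Fin d → ℕ) : Prop :=
  ∃ k₀ : Fin d, (∀ k : Fin d, k < k₀ → u k = u' k) ∧ u k₀ < u' k₀

theorem Fin.perm_two_eq_one_or_swap (σ : Equiv.Perm (Fin 2)) : σ = 1 ∨ σ = Equiv.swap 0 1 := by
  revert σ; decide

theorem Fin.eq_or_eq_swap_of_perm_two {α : Type*} {a b : α} {v : Fin 2 → α}
    {σ : Equiv.Perm (Fin 2)} (hv : ∀ j, v j = ![a, b] (σ j)) : v = ![a, b] ∨ v = ![b, a] := by
  rcases Fin.perm_two_eq_one_or_swap σ with rfl | rfl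
  · left; funext j; simp [hv]
  · right; funext j; fin_cases j <;> simp [hv]

section
variable {q : ℕ}

theorem Constructible.eq_base_of_level_one {lab : Fin 1 → ℕ} {u : Fin 2 → Fin 1 → ℕ}
    (H : Constructible q 1 lab u) :
    ∃ ℓ, 1 ≤ ℓ ∧ ℓ ≤ q ∧ lab = (fun _ => ℓ) ∧ u = ![![1], ![2]] := by
  cases H with
  | base ℓ h1 hq => exact ⟨ℓ, h1, hq, rfl, rfl⟩
  | step hR => cases hR

theorem ltNode_one_two_iff {ℓ₀ ℓ : ℕ} : ltNode (fun _ : Fin 1 => ℓ₀) ℓ ![1] ![2] ↔ ℓ₀ ≠ ℓ := by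
  simp [ltNode]

theorem ltNode_two_one_iff {ℓ₀ ℓ : ℕ} : ltNode (fun _ : Fin 1 => ℓ₀) ℓ ![2] ![1] ↔ ℓ₀ = ℓ := by
  simp [ltNode]

-- `insertLast v h` is `(v_1·1,…,v_h·1,v_h·2,…,v_{d+1}·2)`, the data produced by a step.
def insertLast {d : ℕ} (v : Fin (d + 1) → Fin d → ℕ) (h : ℕ) (hh : h ≤ d + 1) :
    Fin (d + 2) → Fin (d + 1) → ℕ :=
  fun j => if hj : (j : ℕ) < h then Fin.snoc (v ⟨(j : ℕ), by omega⟩) 1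
    else Fin.snoc (v ⟨(j : ℕ) - 1, by omega⟩) 2

theorem insertLast_one (x y : ℕ) :
    insertLast ![![x], ![y]] 1 (by omega) = ![![x, 1], ![x, 2], ![y, 2]] := by
  funext j; fin_cases j <;> simp [insertLast]

theorem insertLast_two (x y : ℕ) :
    insertLast ![![x], ![y]] 2 le_rfl = ![![x, 1], ![y, 1], ![y, 2]] := by
  funext j; fin_cases j <;> simp [insertLast]

theorem Fin.snoc_const_fin_one (ℓ₀ ℓ : ℕ) : (Fin.snoc (fun _ : Fin 1 => ℓ₀) ℓ : Fin 2 → ℕ) = ![ℓ₀, ℓ] := by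
  funext k; fin_cases k <;> rfl

theorem constructible_two_iff {lab : Fin 2 → ℕ} {u : Fin 3 → Fin 2 → ℕ} :
    Constructible q 2 lab u ↔
      ∃ ℓ₀ ℓ, 1 ≤ ℓ₀ ∧ ℓ₀ ≤ q ∧ 1 ≤ ℓ ∧ ℓ ≤ q ∧ lab = ![ℓ₀, ℓ] ∧
        ∃ v : Fin 2 → Fin 1 → ℕ, (v = ![![1], ![2]] ∨ v = ![![2], ![1]]) ∧
          ltNode (fun _ => ℓ₀) ℓ (v 0) (v 1) ∧
          ∃ h, ∃ hh : 1 ≤ h ∧ h ≤ 2, u = insertLast v h hh.2 := by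
  constructor
  · rintro (_ | ⟨hR, ℓ, h1, hq, v, σ, hv, hsort, h, hh1, hh2⟩)
    obtain ⟨ℓ₀, h₀1, h₀q, rfl, rfl⟩ := hR.eq_base_of_level_one
    exact ⟨ℓ₀, ℓ, h₀1, h₀q, h1, hq, Fin.snoc_const_fin_one ℓ₀ ℓ, v, Fin.eq_or_eq_swap_of_perm_two hv,
      hsort 0 1 Fin.zero_lt_one, h, ⟨hh1, hh2⟩, rfl⟩
  · rintro ⟨ℓ₀, ℓ, h₀1, h₀q, h1, hq, rfl, v, hv, hsort, h, hh, rfl⟩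
    obtain ⟨σ, hσ⟩ : ∃ σ : Equiv.Perm (Fin 2), ∀ j, v j = ![![1], ![2]] (σ j) := by
      rcases hv with rfl | rfl
      exacts [⟨1, fun j => rfl⟩, ⟨Equiv.swap 0 1, by decide⟩]
    rw [← Fin.snoc_const_fin_one]
    refine .step (.base ℓ₀ h₀1 h₀q) ℓ h1 hq v σ hσ ?_ h hh.1 hh.2
    simpa [Fin.forall_fin_two] using hsort

end

theorem constructible_level_two_general (q : ℕ)
    (lab : Fin 2 → ℕ) (u : Fin 3 → Fin 2 → ℕ) :
    Constructible q 2 lab u ↔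
      ((∃ ℓ : ℕ, 1 ≤ ℓ ∧ ℓ ≤ q ∧ lab = ![ℓ, ℓ] ∧
          (u = ![![2, 1], ![2, 2], ![1, 2]] ∨ u = ![![2, 1], ![1, 1], ![1, 2]])) ∨
       (∃ ℓ₁ ℓ₂ : ℕ, 1 ≤ ℓ₁ ∧ ℓ₁ ≤ q ∧ 1 ≤ ℓ₂ ∧ ℓ₂ ≤ q ∧ ℓ₁ ≠ ℓ₂ ∧ lab = ![ℓ₁, ℓ₂] ∧
          (u = ![![1, 1], ![1, 2], ![2, 2]] ∨ u = ![![1, 1], ![2, 1], ![2, 2]]))) := by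
  rw [constructible_two_iff]
  constructor
  · rintro ⟨ℓ₀, ℓ, h₀1, h₀q, h1, hq, rfl, v, rfl | rfl, hsort, h, ⟨hh1, hh2⟩, rfl⟩
    · have hne : ℓ₀ ≠ ℓ := ltNode_one_two_iff.mp hsort
      obtain rfl | rfl : h = 1 ∨ h = 2 := by omega
      · exact .inr ⟨ℓ₀, ℓ, h₀1, h₀q, h1, hq, hne, rfl, .inl (insertLast_one 1 2)⟩
      · exact .inr ⟨ℓ₀, ℓ, h₀1, h₀q, h1, hq, hne, rfl, .inr (insertLast_two 1 2)⟩
    · obtain rfl : ℓ₀ = ℓ := ltNode_two_one_iff.mp hsort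
      obtain rfl | rfl : h = 1 ∨ h = 2 := by omega
      · exact .inl ⟨ℓ₀, h₀1, h₀q, rfl, .inl (insertLast_one 2 1)⟩
      · exact .inl ⟨ℓ₀, h₀1, h₀q, rfl, .inr (insertLast_two 2 1)⟩
  · rintro (⟨ℓ, h1, hq, rfl, rfl | rfl⟩ | ⟨ℓ₁, ℓ₂, h₁1, h₁q, h₂1, h₂q, hne, rfl, rfl | rfl⟩)
    · exact ⟨ℓ, ℓ, h1, hq, h1, hq, rfl, _, .inr rfl, ltNode_two_one_iff.mpr rfl, 1, by omega,
        (insertLast_one 2 1).symm⟩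
    · exact ⟨ℓ, ℓ, h1, hq, h1, hq, rfl, _, .inr rfl, ltNode_two_one_iff.mpr rfl, 2, by omega,
        (insertLast_two 2 1).symm⟩
    · exact ⟨ℓ₁, ℓ₂, h₁1, h₁q, h₂1, h₂q, rfl, _, .inl rfl, ltNode_one_two_iff.mpr hne, 1, by omega,
        (insertLast_one 1 2).symm⟩
    · exact ⟨ℓ₁, ℓ₂, h₁1, h₁q, h₂1, h₂q, rfl, _, .inl rfl, ltNode_one_two_iff.mpr hne, 2, by omega,
        (insertLast_two 1 2).symm⟩

/-- The constructible special point data of level 2 with `q` nodes are exactly: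
`((ℓ,ℓ),((2,1),(2,2),(1,2)))` and `((ℓ,ℓ),((2,1),(1,1),(1,2)))` for `ℓ ∈ {1,…,q}`, and
`((ℓ₁,ℓ₂),((1,1),(1,2),(2,2)))` and `((ℓ₁,ℓ₂),((1,1),(2,1),(2,2)))` for distinct
`ℓ₁, ℓ₂ ∈ {1,…,q}`. -/
theorem constructible_level_two (q : ℕ) (hq : 1 ≤ q)
    (lab : Fin 2 → ℕ) (u : Fin 3 → Fin 2 → ℕ) :
    Constructible q 2 lab u ↔
      ((∃ ℓ : ℕ, 1 ≤ ℓ ∧ ℓ ≤ q ∧ lab = ![ℓ, ℓ] ∧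
          (u = ![![2, 1], ![2, 2], ![1, 2]] ∨ u = ![![2, 1], ![1, 1], ![1, 2]])) ∨
       (∃ ℓ₁ ℓ₂ : ℕ, 1 ≤ ℓ₁ ∧ ℓ₁ ≤ q ∧ 1 ≤ ℓ₂ ∧ ℓ₂ ≤ q ∧ ℓ₁ ≠ ℓ₂ ∧ lab = ![ℓ₁, ℓ₂] ∧
          (u = ![![1, 1], ![1, 2], ![2, 2]] ∨ u = ![![1, 1], ![2, 1], ![2, 2]]))) :=
  constructible_level_two_general q lab u
end

section
/- For each ℓ ∈ {1,…,q}, the constructible special point data of level 3 with q nodes whose node labels are (ℓ,ℓ,ℓ) are exactly the following six: ((ℓ,ℓ,ℓ),((1,2,1),(1,2,2),(2,1,2),(1,1,2))), ((ℓ,ℓ,ℓ),((1,2,1),(2,1,1),(2,1,2),(1,1,2))), ((ℓ,ℓ,ℓ),((1,2,1),(2,1,1),(1,1,1),(1,1,2))), ((ℓ,ℓ,ℓ),((2,2,1),(2,2,2),(1,2,2),(2,1,2))), ((ℓ,ℓ,ℓ),((2,2,1),(1,2,1),(1,2,2),(2,1,2))), and ((ℓ,ℓ,ℓ),((2,2,1),(1,2,1),(2,1,1),(2,1,2))).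 -/
/-!
A datum of level `d + 1` arises from one of level `d` by sorting its `d + 1` points for `<_ℓ`
and appending `1` to the first `h` of them and `2` to the others. Since `<_ℓ` is asymmetric,
the sorted rearrangement of a tuple is unique, so with constant labels each datum of level `d`
has exactly `d + 1` children. Starting from `((1),(2))` this leaves two data of level 2 and six
of level 3, which are computed by evaluation.
-/

open Equiv

theorem ltNode_asymm {d : ℕ} {lab : Fin d → ℕ} {ℓ : ℕ} {u u' : Fin d → ℕ}
    (h : ltNode lab ℓ u u') : ¬ ltNode lab ℓ u' u := by
  rintro (⟨k₁, hl₁, hu'₁, hu₁, hagree₁⟩ | ⟨hsame', k₁, hl₁, hu'₁, hu₁, hagree₁⟩) <;>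
  rcases h with ⟨k₀, hl₀, hu₀, hu'₀, hagree₀⟩ | ⟨hsame, k₀, hl₀, hu₀, hu'₀, hagree₀⟩
  · rcases lt_trichotomy k₀ k₁ with hk | rfl | hk
    · have := hagree₀ k₁ hk hl₁; omega
    · omega
    · have := hagree₁ k₀ hk hl₀; omega
  · have := hsame k₁ hl₁; omega
  · have := hsame' k₀ hl₀; omega
  · rcases lt_trichotomy k₀ k₁ with hk | rfl | hk
    · have := hagree₁ k₀ hk; omega
    · omega
    · have := hagree₀ k₁ hk; omega

instance {d : ℕ} (lab : Fin d → ℕ) (ℓ : ℕ) : Std.Asymm (ltNode lab ℓ) :=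
  ⟨fun _ _ => ltNode_asymm⟩

theorem ltNode_const_iff {d : ℕ} {ℓ : ℕ} {u u' : Fin d → ℕ} :
    ltNode (fun _ => ℓ) ℓ u u' ↔
      ∃ k₀, u k₀ = 2 ∧ u' k₀ = 1 ∧ ∀ k, k₀ < k → u k = u' k := by
  simp [ltNode]

theorem Equiv.Perm.comp_eq_of_pairwise {α : Type*} {r : α → α → Prop} [Std.Asymm r] {n : ℕ}
    {f : Fin n → α} {σ τ : Perm (Fin n)}
    (hσ : ∀ i j, i < j → r (f (σ i)) (f (σ j))) (hτ : ∀ i j, i < j → r (f (τ i)) (f (τ j))) :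
    f ∘ σ = f ∘ τ :=
  List.ofFn_injective <|
    ((σ.ofFn_comp_perm f).trans (τ.ofFn_comp_perm f).symm).eq_of_pairwise
      (fun _ _ _ _ hab hba => (asymm hab hba).elim)
      (List.pairwise_ofFn.mpr hσ) (List.pairwise_ofFn.mpr hτ)

theorem Equiv.Perm.exists_pairwise_comp_iff {α : Type*} {r : α → α → Prop} [Std.Asymm r]
    {n : ℕ} {f : Fin n → α} (τ : Perm (Fin n))
    (hτ : ∀ i j, i < j → r (f (τ i)) (f (τ j))) (P : (Fin n → α) → Prop) :
    (∃ σ : Perm (Fin n), (∀ i j, i < j → r (f (σ i)) (f (σ j))) ∧ P (f ∘ σ)) ↔ P (f ∘ τ) :=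
  ⟨fun ⟨_, hσ, hP⟩ => Perm.comp_eq_of_pairwise hσ hτ ▸ hP, fun hP => ⟨τ, hτ, hP⟩⟩

/-- The data built by `Constructible.step` from the sorted points `v`, with `h + 1` in place of
its `h`; the point `v h` occurs twice, once with each appended coordinate. -/
def appendCoord {d : ℕ} (v : Fin (d + 1) → Fin d → ℕ) (h : Fin (d + 1)) (j : Fin (d + 2)) :
    Fin (d + 1) → ℕ :=
  if hj : (j : ℕ) ≤ h then Fin.snoc (v ⟨j, by omega⟩) 1 else Fin.snoc (v ⟨j - 1, by omega⟩) 2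

theorem constructible_one_iff {q : ℕ} {lab : Fin 1 → ℕ} {u : Fin 2 → Fin 1 → ℕ} :
    Constructible q 1 lab u ↔ 1 ≤ lab 0 ∧ lab 0 ≤ q ∧ u = ![![1], ![2]] := by
  constructor
  · rintro (⟨ℓ, h1, hq⟩ | ⟨hR⟩)
    · exact ⟨h1, hq, rfl⟩
    · cases hR
  · rintro ⟨h1, hq, rfl⟩
    convert Constructible.base (q := q) _ h1 hq

theorem constructible_snoc_iff {q d : ℕ} (hd : d ≠ 0) {lab : Fin d → ℕ} {ℓ : ℕ}
    {u : Fin (d + 2) → Fin (d + 1) → ℕ} :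
    Constructible q (d + 1) (Fin.snoc lab ℓ) u ↔ 1 ≤ ℓ ∧ ℓ ≤ q ∧
      ∃ u₀, Constructible q d lab u₀ ∧ ∃ σ : Perm (Fin (d + 1)),
        (∀ i j, i < j → ltNode lab ℓ (u₀ (σ i)) (u₀ (σ j))) ∧
        u ∈ Set.range (appendCoord (u₀ ∘ σ)) := by
  constructor
  · intro H
    generalize hL : (Fin.snoc lab ℓ : Fin (d + 1) → ℕ) = L at H
    cases H with
    | base => omega
    | step hR ℓ' h1 hq v σ hv hsort h hh1 hh2 =>
      obtain ⟨rfl, rfl⟩ := Fin.snoc_injective2 hL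
      obtain rfl : v = _ ∘ σ := funext hv
      refine ⟨h1, hq, _, hR, σ, hsort, ⟨h - 1, by omega⟩, ?_⟩
      funext j
      simp only [appendCoord]
      split_ifs <;> first | rfl | omega
  · rintro ⟨h1, hq, u₀, hR, σ, hsort, h, rfl⟩
    convert Constructible.step hR ℓ h1 hq _ σ (fun _ => rfl) hsort (h + 1) (by omega) (by omega)
      using 1
    funext j
    simp only [appendCoord]
    split_ifs <;> first | rfl | omega

theorem Fin.snoc_const_self {α : Type*} {n : ℕ} (a : α) :
    (Fin.snoc (fun _ : Fin n => a) a : Fin (n + 1) → α) = fun _ => a := by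
  funext i; refine Fin.lastCases ?_ (fun _ => ?_) i <;> simp

theorem constructible_const_succ_iff {q d : ℕ} (hd : d ≠ 0) {ℓ : ℕ}
    {u : Fin (d + 2) → Fin (d + 1) → ℕ} :
    Constructible q (d + 1) (fun _ => ℓ) u ↔ 1 ≤ ℓ ∧ ℓ ≤ q ∧
      ∃ u₀, Constructible q d (fun _ => ℓ) u₀ ∧ ∃ σ : Perm (Fin (d + 1)),
        (∀ i j, i < j → ltNode (fun _ => ℓ) ℓ (u₀ (σ i)) (u₀ (σ j))) ∧
        u ∈ Set.range (appendCoord (u₀ ∘ σ)) := by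
  rw [← Fin.snoc_const_self, constructible_snoc_iff hd]

theorem constructible_two_const_iff {q ℓ : ℕ} {u : Fin 3 → Fin 2 → ℕ} :
    Constructible q 2 (fun _ => ℓ) u ↔ 1 ≤ ℓ ∧ ℓ ≤ q ∧
      (u = ![![2, 1], ![2, 2], ![1, 2]] ∨ u = ![![2, 1], ![1, 1], ![1, 2]]) := by
  have hsorted : ∀ i j : Fin 2, i < j →
      ltNode (fun _ => ℓ) ℓ (![![1], ![2]] (swap 0 1 i)) (![![1], ![2]] (swap 0 1 j)) := by
    simp only [ltNode_const_iff]; decide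
  have hchildren : List.ofFn (appendCoord (![![1], ![2]] ∘ swap 0 1)) =
      [![![2, 1], ![2, 2], ![1, 2]], ![![2, 1], ![1, 1], ![1, 2]]] := by decide
  rw [constructible_const_succ_iff one_ne_zero]
  refine and_congr_right fun h1 => and_congr_right fun hq => ?_
  simp only [constructible_one_iff, h1, hq, true_and, exists_eq_left]
  refine (Perm.exists_pairwise_comp_iff _ hsorted
    (fun v => u ∈ Set.range (appendCoord v))).trans ?_
  rw [← List.mem_ofFn', hchildren]
  simp

theorem constructible_three_const_iff {q ℓ : ℕ} {u : Fin 4 → Fin 3 → ℕ} :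
    Constructible q 3 (fun _ => ℓ) u ↔ 1 ≤ ℓ ∧ ℓ ≤ q ∧
      (u = ![![1, 2, 1], ![1, 2, 2], ![2, 1, 2], ![1, 1, 2]] ∨
       u = ![![1, 2, 1], ![2, 1, 1], ![2, 1, 2], ![1, 1, 2]] ∨
       u = ![![1, 2, 1], ![2, 1, 1], ![1, 1, 1], ![1, 1, 2]] ∨
       u = ![![2, 2, 1], ![2, 2, 2], ![1, 2, 2], ![2, 1, 2]] ∨
       u = ![![2, 2, 1], ![1, 2, 1], ![1, 2, 2], ![2, 1, 2]] ∨
       u = ![![2, 2, 1], ![1, 2, 1], ![2, 1, 1], ![2, 1, 2]]) := by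
  set A : Fin 3 → Fin 2 → ℕ := ![![2, 1], ![2, 2], ![1, 2]]
  set B : Fin 3 → Fin 2 → ℕ := ![![2, 1], ![1, 1], ![1, 2]]
  have hsortedA : ∀ i j : Fin 3, i < j →
      ltNode (fun _ => ℓ) ℓ (A (finRotate 3 i)) (A (finRotate 3 j)) := by
    simp only [ltNode_const_iff]; decide
  have hsortedB : ∀ i j : Fin 3, i < j →
      ltNode (fun _ => ℓ) ℓ (B ((finRotate 3).symm i)) (B ((finRotate 3).symm j)) := by
    simp only [ltNode_const_iff]; decide
  have hchildrenA : List.ofFn (appendCoord (A ∘ finRotate 3)) =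
      [![![2, 2, 1], ![2, 2, 2], ![1, 2, 2], ![2, 1, 2]],
       ![![2, 2, 1], ![1, 2, 1], ![1, 2, 2], ![2, 1, 2]],
       ![![2, 2, 1], ![1, 2, 1], ![2, 1, 1], ![2, 1, 2]]] := by decide
  have hchildrenB : List.ofFn (appendCoord (B ∘ (finRotate 3).symm)) =
      [![![1, 2, 1], ![1, 2, 2], ![2, 1, 2], ![1, 1, 2]],
       ![![1, 2, 1], ![2, 1, 1], ![2, 1, 2], ![1, 1, 2]],
       ![![1, 2, 1], ![2, 1, 1], ![1, 1, 1], ![1, 1, 2]]] := by decide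
  rw [constructible_const_succ_iff two_ne_zero]
  refine and_congr_right fun h1 => and_congr_right fun hq => ?_
  simp only [constructible_two_const_iff, h1, hq, true_and, or_and_right, exists_or,
    exists_eq_left]
  rw [Perm.exists_pairwise_comp_iff _ hsortedA (fun v => u ∈ Set.range (appendCoord v)),
    Perm.exists_pairwise_comp_iff _ hsortedB (fun v => u ∈ Set.range (appendCoord v)),
    ← List.mem_ofFn', ← List.mem_ofFn', hchildrenA, hchildrenB]
  simp only [List.mem_cons, List.not_mem_nil, or_false]
  tauto

theorem constructible_level_three_same_labels_general (q : ℕ)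
    (ℓ : ℕ) (hℓ1 : 1 ≤ ℓ) (hℓq : ℓ ≤ q) (u : Fin 4 → Fin 3 → ℕ) :
    Constructible q 3 ![ℓ, ℓ, ℓ] u ↔
      (u = ![![1, 2, 1], ![1, 2, 2], ![2, 1, 2], ![1, 1, 2]] ∨
       u = ![![1, 2, 1], ![2, 1, 1], ![2, 1, 2], ![1, 1, 2]] ∨
       u = ![![1, 2, 1], ![2, 1, 1], ![1, 1, 1], ![1, 1, 2]] ∨
       u = ![![2, 2, 1], ![2, 2, 2], ![1, 2, 2], ![2, 1, 2]] ∨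
       u = ![![2, 2, 1], ![1, 2, 1], ![1, 2, 2], ![2, 1, 2]] ∨
       u = ![![2, 2, 1], ![1, 2, 1], ![2, 1, 1], ![2, 1, 2]]) := by
  have hlab : ![ℓ, ℓ, ℓ] = fun _ => ℓ := by
    funext i; fin_cases i <;> rfl
  rw [hlab, constructible_three_const_iff]
  simp only [hℓ1, hℓq, true_and]

/-- For each `ℓ ∈ {1,…,q}`, the constructible special point data of level 3 with `q`
nodes whose node labels are `(ℓ,ℓ,ℓ)` are exactly the six listed tuples. -/
theorem constructible_level_three_same_labels (q : ℕ) (hq : 1 ≤ q)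
    (ℓ : ℕ) (hℓ1 : 1 ≤ ℓ) (hℓq : ℓ ≤ q) (u : Fin 4 → Fin 3 → ℕ) :
    Constructible q 3 ![ℓ, ℓ, ℓ] u ↔
      (u = ![![1, 2, 1], ![1, 2, 2], ![2, 1, 2], ![1, 1, 2]] ∨
       u = ![![1, 2, 1], ![2, 1, 1], ![2, 1, 2], ![1, 1, 2]] ∨
       u = ![![1, 2, 1], ![2, 1, 1], ![1, 1, 1], ![1, 1, 2]] ∨
       u = ![![2, 2, 1], ![2, 2, 2], ![1, 2, 2], ![2, 1, 2]] ∨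
       u = ![![2, 2, 1], ![1, 2, 1], ![1, 2, 2], ![2, 1, 2]] ∨
       u = ![![2, 2, 1], ![1, 2, 1], ![2, 1, 1], ![2, 1, 2]]) :=
  constructible_level_three_same_labels_general q ℓ hℓ1 hℓq u
end
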